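/- Let (X, Y) be a jointly Gaussian random vector in ℝ² with nondegenerate covariance (i.e., both marginal variances positive). If there exist real constants α ≠ 0, β, γ, δ such that αXY + βX + γY + δ = 0 almost surely, then the covariance matrix of (X, Y) is singular — a contradiction; hence no such relation can hold. Equivalently: for a nondegenerate jointly Gaussian (X,Y), the random variable αXY + βX + γY + δ with α ≠ 0 is almost surely nonconstant. -/

import Mathlib

/-!
Write `X` and `Y` as affine functions of the standard Gaussian pair `Z = (Z₁, Z₂)`. The law of
`Z` charges every nonempty open subset of `ℝ²`, so a polynomial in `Z` that vanishes almost
surely vanishes identically. Then the quadratic part `α (a · z) (b · z)` of the relation must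
vanish, so `(a₁ z₁ + a₂ z₂) (b₁ z₁ + b₂ z₂) = 0` for all `z`, forcing `a = 0` or `b = 0`, i.e.
one of the two variances is zero.
-/

open MeasureTheory ProbabilityTheory

instance ProbabilityTheory.isOpenPosMeasure_gaussianReal (μ : ℝ) (v : NNReal) [NeZero v] :
    (gaussianReal μ v).IsOpenPosMeasure :=
  (gaussianReal_absolutelyContinuous' μ (NeZero.ne v)).isOpenPosMeasure

theorem Continuous.eq_zero_of_ae_comp_eq_zero {Ω E : Type*} [MeasurableSpace Ω]
    [TopologicalSpace E] [MeasurableSpace E] [OpensMeasurableSpace E]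
    {μ : Measure Ω} {ν : Measure E} [ν.IsOpenPosMeasure] {Z : Ω → E}
    (hZ : AEMeasurable Z μ) (hlaw : μ.map Z = ν) {f : E → ℝ} (hf : Continuous f)
    (h : ∀ᵐ ω ∂μ, f (Z ω) = 0) : f = 0 := by
  refine (hf.ae_eq_iff_eq ν continuous_zero).mp ?_
  rw [← hlaw, Filter.EventuallyEq, ae_map_iff hZ (isClosed_eq hf continuous_zero).measurableSet]
  exact h

theorem quadratic_part_eq_zero_of_forall_eq_zero {α β γ δ a₁ a₂ b₁ b₂ m₁ m₂ : ℝ} (hα : α ≠ 0)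
    (h : ∀ x y : ℝ, α * (a₁ * x + a₂ * y + m₁) * (b₁ * x + b₂ * y + m₂)
      + β * (a₁ * x + a₂ * y + m₁) + γ * (b₁ * x + b₂ * y + m₂) + δ = 0)
    (x y : ℝ) : (a₁ * x + a₂ * y) * (b₁ * x + b₂ * y) = 0 := by
  -- the symmetric second difference `h z + h (-z) - 2 h 0` kills the affine terms
  have hα_quad : α * ((a₁ * x + a₂ * y) * (b₁ * x + b₂ * y)) = 0 := by
    linear_combination (h x y + h (-x) (-y) - 2 * h 0 0) / 2
  exact (mul_eq_zero.mp hα_quad).resolve_left hα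

theorem sum_sq_mul_sum_sq_eq_zero_of_forall_mul_eq_zero {a₁ a₂ b₁ b₂ : ℝ}
    (h : ∀ x y : ℝ, (a₁ * x + a₂ * y) * (b₁ * x + b₂ * y) = 0) :
    (a₁ ^ 2 + a₂ ^ 2) * (b₁ ^ 2 + b₂ ^ 2) = 0 := by
  have h₁₀ := h 1 0
  have h₀₁ := h 0 1
  have h₁₁ := h 1 1
  simp only [mul_one, mul_zero, add_zero, zero_add] at h₁₀ h₀₁ h₁₁
  have hcross : a₁ * b₂ + a₂ * b₁ = 0 := by linear_combination h₁₁ - h₁₀ - h₀₁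
  calc (a₁ ^ 2 + a₂ ^ 2) * (b₁ ^ 2 + b₂ ^ 2)
      = (a₁ * b₁) ^ 2 + (a₂ * b₂) ^ 2 + (a₁ * b₂ + a₂ * b₁) ^ 2 - 2 * (a₁ * b₁) * (a₂ * b₂) := by
        ring
    _ = 0 := by rw [h₁₀, h₀₁, hcross]; ring

/-- For a nondegenerate jointly Gaussian pair `(X, Y)` (here realized as linear
combinations of two independent standard Gaussians, with both marginal variances
positive), the random variable `α·X·Y + β·X + γ·Y + δ` with `α ≠ 0` cannot be
almost surely equal to `0`; equivalently no such affine-in-the-product relation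
can hold almost surely. -/
theorem stmt_2 {Ω : Type*} [MeasureSpace Ω] [IsProbabilityMeasure (ℙ : Measure Ω)]
    (Z₁ Z₂ : Ω → ℝ) (hZ₁m : Measurable Z₁) (hZ₂m : Measurable Z₂)
    (hZ₁ : Measure.map Z₁ ℙ = gaussianReal 0 1)
    (hZ₂ : Measure.map Z₂ ℙ = gaussianReal 0 1)
    (hindep : IndepFun Z₁ Z₂ ℙ)
    (a₁ a₂ b₁ b₂ m₁ m₂ : ℝ)
    (X : Ω → ℝ) (hX : ∀ ω, X ω = a₁ * Z₁ ω + a₂ * Z₂ ω + m₁)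
    (Y : Ω → ℝ) (hY : ∀ ω, Y ω = b₁ * Z₁ ω + b₂ * Z₂ ω + m₂)
    (hVarX : 0 < a₁ ^ 2 + a₂ ^ 2)  -- Var X > 0
    (hVarY : 0 < b₁ ^ 2 + b₂ ^ 2)  -- Var Y > 0
    (α β γ δ : ℝ) (hα : α ≠ 0) :
    ¬ (∀ᵐ ω ∂(ℙ : Measure Ω), α * X ω * Y ω + β * X ω + γ * Y ω + δ = 0) := by
  intro h
  have hlaw :
      Measure.map (fun ω => (Z₁ ω, Z₂ ω)) ℙ = (gaussianReal 0 1).prod (gaussianReal 0 1) := by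
    rw [(indepFun_iff_map_prod_eq_prod_map_map hZ₁m.aemeasurable hZ₂m.aemeasurable).mp hindep,
      hZ₁, hZ₂]
  have hrel : (fun z : ℝ × ℝ => α * (a₁ * z.1 + a₂ * z.2 + m₁) * (b₁ * z.1 + b₂ * z.2 + m₂)
      + β * (a₁ * z.1 + a₂ * z.2 + m₁) + γ * (b₁ * z.1 + b₂ * z.2 + m₂) + δ) = 0 := by
    refine Continuous.eq_zero_of_ae_comp_eq_zero (hZ₁m.prodMk hZ₂m).aemeasurable hlaw
      (by fun_prop) ?_
    filter_upwards [h] with ω hω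
    simpa only [hX, hY] using hω
  have hquad := quadratic_part_eq_zero_of_forall_eq_zero hα fun x y => congrFun hrel (x, y)
  exact (mul_pos hVarX hVarY).ne' (sum_sq_mul_sum_sq_eq_zero_of_forall_mul_eq_zero hquad)
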